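/- Let P : ℓ_p × ... × ℓ_p → 𝕂 be an (n_1,...,n_m)-homogeneous polynomial with coefficient expansion P(x^(1),...,x^(m)) = Σ_{|α^(1)|=n_1,...,|α^(m)|=n_m} c_{α^(1)...α^(m)}(P) (x^(1))^{α^(1)} ··· (x^(m))^{α^(m)}. Let ℕ = ℕ_1 ∪ ... ∪ ℕ_m be a disjoint union of infinite subsets and define the (n_1+...+n_m)-homogeneous polynomial Q : ℓ_p → 𝕂 by Q(z) = P((z_j)_{j∈ℕ_1}, ..., (z_j)_{j∈ℕ_m}), where (z_j)_{j∈ℕ_k} denotes z with coordinates outside ℕ_k set to zero. Then ‖Q‖ ≤ ‖P‖ and for every s > 0, Σ_{|β|=n_1+...+n_m} |c_β(Q)|^s = Σ_{|α^(1)|=n_1,...,|α^(m)|=n_m} |c_{α^(1)...α^(m)}(P)|^s. -/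

import Mathlib

/-!
Substituting `z ∘ e j` for the `j`-th variable turns the monomial `∏ⱼ (x⁽ʲ⁾)^{α⁽ʲ⁾}` into the
single monomial `z^β` with `β = ∑ⱼ (e j)_* α⁽ʲ⁾`. Since the ranges of the `e j` are disjoint,
`α ↦ β` is injective, so `Q` has exactly the coefficients of `P`, relabelled. For the norm
bound, `z ∘ e j` is a restriction of `z` and hence lies in the unit ball of `ℓ_p` with `z`.
-/

open Function

namespace Finsupp

variable {ι κ σ M : Type*} [Fintype ι] [AddCommMonoid M]

noncomputable def sumMapDomain (e : ι → κ → σ) (α : ι → κ →₀ M) : σ →₀ M :=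
  ∑ j, (α j).mapDomain (e j)

theorem sumMapDomain_apply_apply {e : ι → κ → σ} (hinj : ∀ j, Injective (e j))
    (hdisj : Pairwise (Disjoint on fun j => Set.range (e j))) (α : ι → κ →₀ M) (j : ι) (k : κ) :
    sumMapDomain e α (e j k) = α j k := by
  classical
  rw [sumMapDomain, finsetSum_apply, Finset.sum_eq_single j]
  · exact mapDomain_apply (hinj j) _ _
  · intro j' _ hj'
    exact mapDomain_of_notMem_range _ _ fun hmem => Set.disjoint_left.1 (hdisj hj') hmem ⟨k, rfl⟩
  · exact fun h => absurd (Finset.mem_univ j) h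

theorem sumMapDomain_injective {e : ι → κ → σ} (hinj : ∀ j, Injective (e j))
    (hdisj : Pairwise (Disjoint on fun j => Set.range (e j))) :
    Injective (sumMapDomain (M := M) e) := fun α α' h => by
  ext j k
  rw [← sumMapDomain_apply_apply hinj hdisj α j k, ← sumMapDomain_apply_apply hinj hdisj α' j k, h]

theorem prod_sumMapDomain {N : Type*} [CommMonoid N] {e : ι → κ → σ} (hinj : ∀ j, Injective (e j))
    (α : ι → κ →₀ M) {h : σ → M → N} (h_zero : ∀ a, h a 0 = 1)
    (h_add : ∀ a b₁ b₂, h a (b₁ + b₂) = h a b₁ * h a b₂) :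
    (sumMapDomain e α).prod h = ∏ j, (α j).prod fun k t => h (e j k) t := by
  rw [sumMapDomain, ← prod_finsetSum_index h_zero h_add]
  exact Finset.prod_congr rfl fun j _ => prod_mapDomain_index_inj (hinj j)

theorem sum_sumMapDomain {N : Type*} [AddCommMonoid N] {e : ι → κ → σ}
    (hinj : ∀ j, Injective (e j)) (α : ι → κ →₀ M) {h : σ → M → N} (h_zero : ∀ a, h a 0 = 0)
    (h_add : ∀ a b₁ b₂, h a (b₁ + b₂) = h a b₁ + h a b₂) :
    (sumMapDomain e α).sum h = ∑ j, (α j).sum fun k t => h (e j k) t := by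
  rw [sumMapDomain, ← sum_finsetSum_index h_zero h_add]
  exact Finset.sum_congr rfl fun j _ => sum_mapDomain_index_inj (hinj j)

end Finsupp

section lp

variable {α β E : Type*} [NormedAddCommGroup E] {p : ENNReal}

theorem Memℓp.comp_injective (hp : 0 < p.toReal) {z : α → E} (hz : Memℓp z p) {f : β → α}
    (hf : Injective f) : Memℓp (z ∘ f) p :=
  memℓp_gen ((hz.summable hp).comp_injective hf)

theorem lp.norm_comp_injective_le (hp : 0 < p.toReal) (z : lp (fun _ : α => E) p) {f : β → α}
    (hf : Injective f) :
    ‖(⟨z ∘ f, (lp.memℓp z).comp_injective hp hf⟩ : lp (fun _ : β => E) p)‖ ≤ ‖z‖ := by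
  refine (Real.rpow_le_rpow_iff (lp.norm_nonneg' _) (lp.norm_nonneg' z) hp).1 ?_
  rw [lp.norm_rpow_eq_tsum hp, lp.norm_rpow_eq_tsum hp]
  exact Summable.tsum_le_tsum_of_inj f hf (fun _ _ => by positivity) (fun _ => le_rfl)
    (((lp.memℓp z).summable hp).comp_injective hf) ((lp.memℓp z).summable hp)

end lp

open Finsupp in
theorem stmt6_general {𝕂 : Type*} [RCLike 𝕂] (m : ℕ)
    (nn : Fin m → ℕ)
    (p : ℝ) (hp : 1 ≤ p)
    (c : (Fin m → (ℕ →₀ ℕ)) →₀ 𝕂)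
    (hdeg : ∀ α ∈ c.support, ∀ j, (α j).sum (fun _ t => t) = nn j)
    (e : Fin m → ℕ → ℕ) (hinj : ∀ j, Function.Injective (e j))
    (hdisj : ∀ j₁ j₂, j₁ ≠ j₂ → Disjoint (Set.range (e j₁)) (Set.range (e j₂)))
    (P : (Fin m → (ℕ → 𝕂)) → 𝕂)
    (hP : ∀ x, P x = ∑ α ∈ c.support, c α * ∏ j, (α j).prod fun k t => x j k ^ t)
    (Q : (ℕ → 𝕂) → 𝕂)
    (hQ : ∀ z, Q z = P (fun j k => z (e j k))) :
    ∃ d : (ℕ →₀ ℕ) →₀ 𝕂,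
      (∀ z, Q z = ∑ β ∈ d.support, d β * β.prod fun k t => z k ^ t) ∧
      (∀ β ∈ d.support, β.sum (fun _ t => t) = ∑ j, nn j) ∧
      (∀ B : ℝ, (∀ x : Fin m → lp (fun _ : ℕ => 𝕂) (ENNReal.ofReal p),
          (∀ j, ‖x j‖ ≤ 1) → ‖P (fun j => (x j : ℕ → 𝕂))‖ ≤ B) →
        ∀ z : lp (fun _ : ℕ => 𝕂) (ENNReal.ofReal p), ‖z‖ ≤ 1 →
          ‖Q (z : ℕ → 𝕂)‖ ≤ B) ∧
      (∀ s : ℝ, 0 < s →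
        ∑ β ∈ d.support, ‖d β‖ ^ s = ∑ α ∈ c.support, ‖c α‖ ^ s) := by
  let T : (Fin m → (ℕ →₀ ℕ)) ↪ (ℕ →₀ ℕ) := ⟨sumMapDomain e, sumMapDomain_injective hinj hdisj⟩
  refine ⟨c.embDomain T, fun z => ?_, fun β hβ => ?_, fun B hB z hz => ?_, fun s _ => ?_⟩
  · rw [hQ, hP, support_embDomain, Finset.sum_map]
    refine Finset.sum_congr rfl fun α _ => ?_
    rw [embDomain_apply_self]
    exact congrArg _ (prod_sumMapDomain hinj α (fun _ => pow_zero _) fun _ => pow_add _).symm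
  · obtain ⟨α, hα, rfl⟩ := Finset.mem_map.1 (support_embDomain T c ▸ hβ)
    rw [← Finset.sum_congr rfl fun j _ => hdeg α hα j]
    exact sum_sumMapDomain hinj α (fun _ => rfl) fun _ _ _ => rfl
  · have hp' : 0 < (ENNReal.ofReal p).toReal := by
      rw [ENNReal.toReal_ofReal (by linarith)]; linarith
    rw [hQ]
    exact hB (fun j => ⟨_, (lp.memℓp z).comp_injective hp' (hinj j)⟩)
      fun j => (lp.norm_comp_injective_le hp' z (hinj j)).trans hz
  · rw [support_embDomain, Finset.sum_map]
    simp only [embDomain_apply_self]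

/-- Substituting `m` variables of an `(n₁,…,n_m)`-homogeneous polynomial `P` on `(ℓ_p)^m`
along a decomposition `ℕ = ℕ₁ ∪ ⋯ ∪ ℕ_m` into disjoint infinite sets (enumerated by the
injections `e j`) yields an `(n₁+⋯+n_m)`-homogeneous polynomial `Q` on `ℓ_p` with
`‖Q‖ ≤ ‖P‖` and the same collection of absolute values of coefficients, so that
`∑_β |c_β(Q)|^s = ∑_α |c_{α⁽¹⁾…α⁽ᵐ⁾}(P)|^s` for every `s > 0`. -/
theorem stmt6 {𝕂 : Type*} [RCLike 𝕂] (m : ℕ) (hm : 0 < m)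
    (nn : Fin m → ℕ) (hnn : ∀ j, 0 < nn j)
    (p : ℝ) (hp : 1 ≤ p)
    (c : (Fin m → (ℕ →₀ ℕ)) →₀ 𝕂)
    (hdeg : ∀ α ∈ c.support, ∀ j, (α j).sum (fun _ t => t) = nn j)
    (e : Fin m → ℕ → ℕ) (hinj : ∀ j, Function.Injective (e j))
    (hdisj : ∀ j₁ j₂, j₁ ≠ j₂ → Disjoint (Set.range (e j₁)) (Set.range (e j₂)))
    (hcover : (⋃ j, Set.range (e j)) = Set.univ)
    (P : (Fin m → (ℕ → 𝕂)) → 𝕂)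
    (hP : ∀ x, P x = ∑ α ∈ c.support, c α * ∏ j, (α j).prod fun k t => x j k ^ t)
    (Q : (ℕ → 𝕂) → 𝕂)
    (hQ : ∀ z, Q z = P (fun j k => z (e j k))) :
    ∃ d : (ℕ →₀ ℕ) →₀ 𝕂,
      (∀ z, Q z = ∑ β ∈ d.support, d β * β.prod fun k t => z k ^ t) ∧
      (∀ β ∈ d.support, β.sum (fun _ t => t) = ∑ j, nn j) ∧
      (∀ B : ℝ, (∀ x : Fin m → lp (fun _ : ℕ => 𝕂) (ENNReal.ofReal p),
          (∀ j, ‖x j‖ ≤ 1) → ‖P (fun j => (x j : ℕ → 𝕂))‖ ≤ B) →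
        ∀ z : lp (fun _ : ℕ => 𝕂) (ENNReal.ofReal p), ‖z‖ ≤ 1 →
          ‖Q (z : ℕ → 𝕂)‖ ≤ B) ∧
      (∀ s : ℝ, 0 < s →
        ∑ β ∈ d.support, ‖d β‖ ^ s = ∑ α ∈ c.support, ‖c α‖ ^ s) :=
  stmt6_general m nn p hp c hdeg e hinj hdisj P hP Q hQ
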